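/- arXiv:2303.16602 — 3 statements merged into one kernel-verified Lean document; each statement's English description precedes it below -/
import Mathlib

section
/- Let (a_n) be a strictly increasing sequence of positive integers with ∑ a_n^{-σ'} < ∞ for some real σ' > 0. Then for every complex s with Re(s) > σ' and every real 0 ≤ x < 1, ∑_{n=1}^∞ (a_n + x)^{-s} = ∑_{j=0}^∞ C(-s, j) (∑_{n=1}^∞ a_n^{-(s+j)}) x^j, with absolute convergence of all series. -/
/-!
Each term is expanded by the binomial series,
`(a_n + x)^(-s) = a_n^(-s) (1 + x/a_n)^(-s) = ∑_j C(-s, j) a_n^(-(s+j)) x^j`, valid as `x < 1 ≤ a_n`.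
Since `a_n ≥ 1` and `Re s > σ'`, `|a_n^(-(s+j))| ≤ a_n^(-σ')`, so the double series over `(j, n)` is
dominated by `(∑_j |C(-s, j) x^j|) (∑_n a_n^(-σ'))`; the first factor is finite because the binomial
series converges absolutely inside the unit disc. Hence the double series converges absolutely, and
its two iterated sums, which are the two sides of the formula, agree.
-/

open Complex Filter Topology

/-- Generalized binomial coefficient `C(a, j) = a(a-1)⋯(a-j+1)/j!` for complex `a`. -/
noncomputable def cbinom (a : ℂ) (j : ℕ) : ℂ :=
  (∏ i ∈ Finset.range j, (a - i)) / (j.factorial : ℂ)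

lemma cbinom_eq_choose (a : ℂ) (j : ℕ) : cbinom a j = Ring.choose a j := by
  have h := Ring.descPochhammer_eq_factorial_smul_choose a j
  rw [← Polynomial.aeval_eq_smeval, ← Polynomial.eval_map_algebraMap, descPochhammer_map,
    descPochhammer_eval_eq_prod_range, nsmul_eq_mul] at h
  rw [cbinom, h, mul_div_cancel_left₀ _ (Nat.cast_ne_zero.mpr j.factorial_ne_zero)]

lemma binomialSeries_apply_eq_cbinom_mul_pow (c z : ℂ) (j : ℕ) :
    (binomialSeries ℂ c j fun _ => z) = cbinom c j * z ^ j := by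
  rw [binomialSeries, FormalMultilinearSeries.ofScalars_apply_eq, cbinom_eq_choose, smul_eq_mul]

lemma mem_eball_zero_one {E : Type*} [SeminormedAddCommGroup E] {z : E} (hz : ‖z‖ < 1) :
    z ∈ Metric.eball (0 : E) 1 := by
  simpa [← ENNReal.ofReal_one, Metric.eball_ofReal] using hz

lemma hasSum_cbinom_mul_pow (c : ℂ) {z : ℂ} (hz : ‖z‖ < 1) :
    HasSum (fun j => cbinom c j * z ^ j) ((1 + z) ^ c) := by
  simpa only [binomialSeries_apply_eq_cbinom_mul_pow, zero_add] using
    Complex.one_add_cpow_hasFPowerSeriesOnBall_zero.hasSum (mem_eball_zero_one hz)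

lemma summable_norm_cbinom_mul_pow (c : ℂ) {z : ℂ} (hz : ‖z‖ < 1) :
    Summable (fun j => ‖cbinom c j * z ^ j‖) := by
  simpa only [binomialSeries_apply_eq_cbinom_mul_pow] using (binomialSeries ℂ c).summable_norm_apply
    (Metric.eball_subset_eball binomialSeries_radius_ge_one (mem_eball_zero_one hz))

lemma hasSum_cbinom_mul_cpow_mul_pow (c : ℂ) {b x : ℝ} (hb : 0 < b) (hx : |x| < b) :
    HasSum (fun j : ℕ => cbinom c j * (b : ℂ) ^ (c - j) * (x : ℂ) ^ j)
      (((b + x : ℝ) : ℂ) ^ c) := by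
  have hz : ‖((x / b : ℝ) : ℂ)‖ < 1 := by
    rwa [norm_real, Real.norm_eq_abs, abs_div, abs_of_pos hb, div_lt_one hb]
  have h1 : 0 ≤ 1 + x / b := by
    rw [one_add_div hb.ne']
    exact div_nonneg (by linarith [neg_abs_le x]) hb.le
  have hbx : (((b + x : ℝ) : ℂ)) ^ c = (b : ℂ) ^ c * (1 + ((x / b : ℝ) : ℂ)) ^ c := by
    rw [← ofReal_one, ← ofReal_add, ← mul_cpow_ofReal_nonneg hb.le h1, ← ofReal_mul, mul_one_add,
      mul_div_cancel₀ x hb.ne']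
  have hterm (j : ℕ) : (b : ℂ) ^ c * (cbinom c j * ((x / b : ℝ) : ℂ) ^ j)
      = cbinom c j * (b : ℂ) ^ (c - j) * (x : ℂ) ^ j := by
    rw [cpow_sub _ _ (ofReal_ne_zero.mpr hb.ne'), cpow_natCast, ofReal_div, div_pow]
    field_simp
  simpa only [hterm, ← hbx] using (hasSum_cbinom_mul_pow c hz).mul_left ((b : ℂ) ^ c)

lemma norm_ofReal_cpow_le_rpow {b t : ℝ} (hb : 1 ≤ b) {w : ℂ} (hw : w.re ≤ t) :
    ‖(b : ℂ) ^ w‖ ≤ b ^ t := by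
  rw [norm_cpow_eq_rpow_re_of_pos (zero_lt_one.trans_le hb)]
  exact Real.rpow_le_rpow_of_exponent_le hb hw

lemma summable_norm_uncurry_of_norm_le_mul {β γ E : Type*} [SeminormedAddCommGroup E]
    {f : β → γ → E} {u : β → ℝ} {v : γ → ℝ} (hu : Summable u) (hv : Summable v) (hu0 : 0 ≤ u)
    (hv0 : 0 ≤ v) (h : ∀ i j, ‖f i j‖ ≤ u i * v j) :
    Summable fun p : β × γ => ‖f p.1 p.2‖ :=
  (hu.mul_of_nonneg hv hu0 hv0).of_nonneg_of_le (fun _ => norm_nonneg _) fun p => h p.1 p.2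

lemma summable_norm_tsum_of_summable_norm_uncurry {β γ E : Type*} [NormedAddCommGroup E]
    [CompleteSpace E] {f : β → γ → E} (hf : Summable fun p : β × γ => ‖f p.1 p.2‖) :
    Summable fun i => ‖∑' j, f i j‖ :=
  hf.prod.of_nonneg_of_le (fun _ => norm_nonneg _)
    fun i => norm_tsum_le_tsum_norm (hf.prod_factor i)

theorem ramanujan_formula_hurwitz_general
    (a : ℕ → ℕ) (hpos : ∀ n, 0 < a n)
    (σ' : ℝ)
    (hconv : Summable (fun n : ℕ => ((a (n + 1) : ℝ)) ^ (-σ')))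
    (s : ℂ) (hs : σ' < s.re) (x : ℝ) (hx0 : 0 ≤ x) (hx1 : x < 1) :
    (∀ j : ℕ, Summable (fun n : ℕ =>
        ‖((a (n + 1) : ℝ) : ℂ) ^ (-(s + (j : ℂ)))‖)) ∧
    Summable (fun j : ℕ => ‖cbinom (-s) j *
        (∑' n : ℕ, ((a (n + 1) : ℝ) : ℂ) ^ (-(s + (j : ℂ)))) * (x : ℂ) ^ j‖) ∧
    Summable (fun n : ℕ =>
        ‖(((a (n + 1) : ℝ) + x : ℝ) : ℂ) ^ (-s)‖) ∧
    ∑' n : ℕ, (((a (n + 1) : ℝ) + x : ℝ) : ℂ) ^ (-s) =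
      ∑' j : ℕ, cbinom (-s) j *
        (∑' n : ℕ, ((a (n + 1) : ℝ) : ℂ) ^ (-(s + (j : ℂ)))) * (x : ℂ) ^ j := by
  have hb (n : ℕ) : (1 : ℝ) ≤ a (n + 1) := Nat.one_le_cast.mpr (hpos _)
  have hx : |x| < 1 := abs_lt.mpr ⟨by linarith, hx1⟩
  have hdom (j n : ℕ) : ‖((a (n + 1) : ℝ) : ℂ) ^ (-(s + j))‖ ≤ (a (n + 1) : ℝ) ^ (-σ') :=
    norm_ofReal_cpow_le_rpow (hb n) (by
      simp only [neg_re, add_re, natCast_re]; linarith [j.cast_nonneg (α := ℝ)])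
  have hcoeff : Summable fun j : ℕ => ‖cbinom (-s) j * (x : ℂ) ^ j‖ :=
    summable_norm_cbinom_mul_pow (-s) (by rwa [norm_real, Real.norm_eq_abs])
  set f : ℕ → ℕ → ℂ := fun j n => cbinom (-s) j * ((a (n + 1) : ℝ) : ℂ) ^ (-(s + j)) * x ^ j
    with hf_def
  have hf : Summable fun p : ℕ × ℕ => ‖f p.1 p.2‖ :=
    summable_norm_uncurry_of_norm_le_mul hcoeff hconv (fun _ => norm_nonneg _)
      (fun _ => by positivity) fun j n => by
        simp only [hf_def]
        rw [mul_right_comm, norm_mul]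
        exact mul_le_mul_of_nonneg_left (hdom j n) (norm_nonneg _)
  have hrow (n : ℕ) : HasSum (fun j => f j n) ((((a (n + 1) : ℝ) + x : ℝ) : ℂ) ^ (-s)) := by
    simpa only [hf_def, neg_add'] using
      hasSum_cbinom_mul_cpow_mul_pow (-s) (zero_lt_one.trans_le (hb n)) (hx.trans_le (hb n))
  have hcol (j : ℕ) : ∑' n, f j n
      = cbinom (-s) j * (∑' n : ℕ, ((a (n + 1) : ℝ) : ℂ) ^ (-(s + (j : ℂ)))) * (x : ℂ) ^ j := by
    simp only [hf_def, tsum_mul_left, tsum_mul_right]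
  refine ⟨fun j => hconv.of_nonneg_of_le (fun _ => norm_nonneg _) (hdom j), ?_, ?_, ?_⟩
  · simpa only [hcol] using summable_norm_tsum_of_summable_norm_uncurry hf
  · simpa only [(hrow _).tsum_eq] using
      summable_norm_tsum_of_summable_norm_uncurry (f := fun n j => f j n) hf.prod_symm
  · calc _ = ∑' n, ∑' j, f j n := tsum_congr fun n => (hrow n).tsum_eq.symm
      _ = ∑' j, ∑' n, f j n := (Summable.of_norm (f := Function.uncurry f) hf).tsum_comm
      _ = _ := tsum_congr hcol

theorem ramanujan_formula_hurwitz
    (a : ℕ → ℕ) (hmono : StrictMono a) (hpos : ∀ n, 0 < a n)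
    (σ' : ℝ) (hσ' : 0 < σ')
    (hconv : Summable (fun n : ℕ => ((a (n + 1) : ℝ)) ^ (-σ')))
    (s : ℂ) (hs : σ' < s.re) (x : ℝ) (hx0 : 0 ≤ x) (hx1 : x < 1) :
    (∀ j : ℕ, Summable (fun n : ℕ =>
        ‖((a (n + 1) : ℝ) : ℂ) ^ (-(s + (j : ℂ)))‖)) ∧
    Summable (fun j : ℕ => ‖cbinom (-s) j *
        (∑' n : ℕ, ((a (n + 1) : ℝ) : ℂ) ^ (-(s + (j : ℂ)))) * (x : ℂ) ^ j‖) ∧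
    Summable (fun n : ℕ =>
        ‖(((a (n + 1) : ℝ) + x : ℝ) : ℂ) ^ (-s)‖) ∧
    ∑' n : ℕ, (((a (n + 1) : ℝ) + x : ℝ) : ℂ) ^ (-s) =
      ∑' j : ℕ, cbinom (-s) j *
        (∑' n : ℕ, ((a (n + 1) : ℝ) : ℂ) ^ (-(s + (j : ℂ)))) * (x : ℂ) ^ j :=
  ramanujan_formula_hurwitz_general a hpos σ' hconv s hs x hx0 hx1
end

section
/- Let (a_n) be a strictly increasing sequence of positive integers, 0 ≤ x < 1, and s a fixed complex number with σ = Re(s). Viewed as a power series in z, the series ∑_{n=1}^∞ (a_n + x)^{-s} z^n has radius of convergence α^{σ}, provided log(a_n)/n → log α for some real α > 1. -/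
/-!
Writing `c m = (a m + x) ^ (-s)`, we have `log ‖c m‖ / m = -σ · log (a m + x) / m → -σ log α`,
since `a m ≤ a m + x ≤ (1 + x) a m`. The logarithmic form of the root test then gives
absolute convergence of `∑ c m z ^ m` when `log ‖z‖ < σ log α`, and divergence (the terms
do not tend to zero) when `log ‖z‖ > σ log α`.
-/

open Complex Filter Topology

section RootTest

variable {E : Type*} [SeminormedAddCommGroup E] {c : ℕ → E} {μ : ℝ}

theorem summable_norm_of_tendsto_log_norm_div
    (h : Tendsto (fun n : ℕ => Real.log ‖c n‖ / n) atTop (𝓝 μ)) (hμ : μ < 0) :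
    Summable fun n => ‖c n‖ := by
  have hr : Real.exp (μ / 2) < 1 := Real.exp_lt_one_iff.mpr (by linarith)
  refine Summable.of_norm_bounded_eventually_nat
    (summable_geometric_of_lt_one (Real.exp_pos _).le hr) ?_
  filter_upwards [h.eventually_lt_const (by linarith : μ < μ / 2), eventually_gt_atTop 0]
    with n hn hn0
  have hlog : Real.log ‖c n‖ ≤ n * (μ / 2) := by
    rw [div_lt_iff₀ (by exact_mod_cast hn0)] at hn
    linarith
  calc ‖‖c n‖‖ = ‖c n‖ := norm_norm _
    _ ≤ Real.exp (Real.log ‖c n‖) := Real.le_exp_log _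
    _ ≤ Real.exp (n * (μ / 2)) := Real.exp_le_exp.mpr hlog
    _ = Real.exp (μ / 2) ^ n := Real.exp_nat_mul _ _

theorem not_summable_of_tendsto_log_norm_div
    (h : Tendsto (fun n : ℕ => Real.log ‖c n‖ / n) atTop (𝓝 μ)) (hμ : 0 < μ) :
    ¬ Summable c := by
  intro hc
  have hsmall : ∀ᶠ n in atTop, ‖c n‖ < 1 :=
    (tendsto_zero_iff_norm_tendsto_zero.mp hc.tendsto_atTop_zero).eventually_lt_const one_pos
  obtain ⟨n, hn, hsmall⟩ := (h.eventually_const_lt hμ |>.and hsmall).exists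
  have : Real.log ‖c n‖ / n ≤ 0 :=
    div_nonpos_of_nonpos_of_nonneg (Real.log_nonpos (norm_nonneg _) hsmall.le) n.cast_nonneg
  linarith

end RootTest

section CauchyHadamard

variable {𝕜 : Type*} [NormedDivisionRing 𝕜] {c : ℕ → 𝕜} {ℓ : ℝ}

theorem tendsto_log_norm_mul_pow_div (hc : ∀ n, c n ≠ 0)
    (h : Tendsto (fun n : ℕ => Real.log ‖c n‖ / n) atTop (𝓝 ℓ)) {z : 𝕜} (hz : z ≠ 0) :
    Tendsto (fun n : ℕ => Real.log ‖c n * z ^ n‖ / n) atTop (𝓝 (ℓ + Real.log ‖z‖)) := by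
  refine (h.add tendsto_const_nhds).congr' ?_
  filter_upwards [eventually_ne_atTop 0] with n hn
  rw [norm_mul, norm_pow,
    Real.log_mul (norm_ne_zero_iff.mpr (hc n)) (pow_ne_zero _ (norm_ne_zero_iff.mpr hz)),
    Real.log_pow, add_div, mul_div_cancel_left₀ _ (Nat.cast_ne_zero.mpr hn)]

theorem summable_norm_mul_pow_of_tendsto_log_norm_div (hc : ∀ n, c n ≠ 0)
    (h : Tendsto (fun n : ℕ => Real.log ‖c n‖ / n) atTop (𝓝 ℓ)) {z : 𝕜}
    (hz : ‖z‖ < Real.exp (-ℓ)) : Summable fun n => ‖c n * z ^ n‖ := by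
  rcases eq_or_ne z 0 with rfl | hz0
  · exact (summable_nat_add_iff 1).mp (by simp [summable_zero])
  refine summable_norm_of_tendsto_log_norm_div (tendsto_log_norm_mul_pow_div hc h hz0) ?_
  linarith [(Real.log_lt_iff_lt_exp (norm_pos_iff.mpr hz0)).mpr hz]

theorem not_summable_mul_pow_of_tendsto_log_norm_div (hc : ∀ n, c n ≠ 0)
    (h : Tendsto (fun n : ℕ => Real.log ‖c n‖ / n) atTop (𝓝 ℓ)) {z : 𝕜}
    (hz : Real.exp (-ℓ) < ‖z‖) : ¬ Summable fun n => c n * z ^ n := by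
  have hz0 : z ≠ 0 := norm_pos_iff.mp ((Real.exp_pos _).trans hz)
  refine not_summable_of_tendsto_log_norm_div (tendsto_log_norm_mul_pow_div hc h hz0) ?_
  linarith [(Real.lt_log_iff_exp_lt ((Real.exp_pos _).trans hz)).mpr hz]

end CauchyHadamard

theorem tendsto_log_add_div_of_tendsto_log_div {u : ℕ → ℝ} {ℓ : ℝ} (hu : ∀ n, 1 ≤ u n)
    (h : Tendsto (fun n : ℕ => Real.log (u n) / n) atTop (𝓝 ℓ)) {x : ℝ} (hx : 0 ≤ x) :
    Tendsto (fun n : ℕ => Real.log (u n + x) / n) atTop (𝓝 ℓ) := by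
  have hupper : Tendsto (fun n : ℕ => Real.log (u n) / n + Real.log (1 + x) / n) atTop
      (𝓝 (ℓ + 0)) :=
    h.add (tendsto_const_div_atTop_nhds_zero_nat _)
  rw [add_zero] at hupper
  refine tendsto_of_tendsto_of_tendsto_of_le_of_le h hupper (fun n => ?_) (fun n => ?_) <;>
    have hu0 : 0 < u n := one_pos.trans_le (hu n)
  · gcongr
    linarith
  · rw [← add_div, ← Real.log_mul hu0.ne' (by linarith)]
    gcongr
    nlinarith [hu n]

theorem radius_of_convergence_in_z_general
    (a : ℕ → ℕ) (hpos : ∀ n, 0 < a n)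
    (α : ℝ) (hα : 1 < α)
    (hlog : Tendsto (fun n : ℕ => Real.log (a n) / n) atTop (𝓝 (Real.log α)))
    (x : ℝ) (hx0 : 0 ≤ x) (s : ℂ) :
    (∀ z : ℂ, ‖z‖ < α ^ s.re →
      Summable (fun n : ℕ =>
        ‖(((a (n + 1) : ℝ) + x : ℝ) : ℂ) ^ (-s) * z ^ (n + 1)‖)) ∧
    (∀ z : ℂ, α ^ s.re < ‖z‖ →
      ¬ Summable (fun n : ℕ =>
        (((a (n + 1) : ℝ) + x : ℝ) : ℂ) ^ (-s) * z ^ (n + 1))) := by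
  have ha : ∀ n, (1 : ℝ) ≤ a n := fun n => by exact_mod_cast hpos n
  have hax : ∀ n, (0 : ℝ) < a n + x := fun n => by linarith [ha n]
  let c : ℕ → ℂ := fun n => (((a n : ℝ) + x : ℝ) : ℂ) ^ (-s)
  have hnorm : ∀ n, ‖c n‖ = ((a n : ℝ) + x) ^ (-s.re) := fun n =>
    norm_cpow_eq_rpow_re_of_pos (hax n) _
  have hc : ∀ n, c n ≠ 0 := fun n =>
    norm_pos_iff.mp (by rw [hnorm]; exact Real.rpow_pos_of_pos (hax n) _)
  have hlimit :
      Tendsto (fun n : ℕ => Real.log ‖c n‖ / n) atTop (𝓝 (-s.re * Real.log α)) := by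
    refine ((tendsto_log_add_div_of_tendsto_log_div ha hlog hx0).const_mul (-s.re)).congr
      fun n => ?_
    rw [hnorm, Real.log_rpow (hax n), mul_div_assoc]
  have hradius : Real.exp (-(-s.re * Real.log α)) = α ^ s.re := by
    rw [Real.rpow_def_of_pos (by linarith), neg_mul, neg_neg, mul_comm]
  rw [← hradius]
  exact ⟨fun z hz => (summable_nat_add_iff 1).mpr
      (summable_norm_mul_pow_of_tendsto_log_norm_div hc hlimit hz),
    fun z hz hsum => not_summable_mul_pow_of_tendsto_log_norm_div hc hlimit hz
      ((summable_nat_add_iff 1).mp hsum)⟩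

theorem radius_of_convergence_in_z
    (a : ℕ → ℕ) (hmono : StrictMono a) (hpos : ∀ n, 0 < a n)
    (α : ℝ) (hα : 1 < α)
    (hlog : Tendsto (fun n : ℕ => Real.log (a n) / n) atTop (𝓝 (Real.log α)))
    (x : ℝ) (hx0 : 0 ≤ x) (hx1 : x < 1) (s : ℂ) :
    (∀ z : ℂ, ‖z‖ < α ^ s.re →
      Summable (fun n : ℕ =>
        ‖(((a (n + 1) : ℝ) + x : ℝ) : ℂ) ^ (-s) * z ^ (n + 1)‖)) ∧
    (∀ z : ℂ, α ^ s.re < ‖z‖ →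
      ¬ Summable (fun n : ℕ =>
        (((a (n + 1) : ℝ) + x : ℝ) : ℂ) ^ (-s) * z ^ (n + 1))) :=
  radius_of_convergence_in_z_general a hpos α hα hlog x hx0 s
end

section
/- Let λ_1 > 0, α_1 > 1 be reals, λ_2, α_2 ∈ ℂ with 0 < |α_2| < α_1, |λ_2 α_2| < λ_1 α_1. Fix a complex s. The function of z given by F(z) = ∑_{k=0}^∞ C(-s,k) λ_1^{-s-k} λ_2^{k} · z/(α_1^{s+k} α_2^{-k} - z) converges normally on compact subsets of ℂ avoiding the points z_k := α_1^{s+k} α_2^{-k} (k ≥ 0), hence defines a meromorphic function of z on ℂ with (at most) simple poles at the points z_k. -/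
open Complex Filter Topology

/-- The `k`-th term of the series defining the continuation in `z`. -/
noncomputable def term15 (s : ℂ) (lam1 α1 : ℝ) (lam2 α2 : ℂ) (k : ℕ) (z : ℂ) : ℂ :=
  cbinom (-s) k * (lam1 : ℂ) ^ (-s - (k : ℂ)) * lam2 ^ k *
    (z / ((α1 : ℂ) ^ (s + (k : ℂ)) * α2 ^ (-(k : ℤ)) - z))

/-- The `k`-th pole location. -/
noncomputable def pole15 (s : ℂ) (α1 : ℝ) (α2 : ℂ) (k : ℕ) : ℂ :=
  (α1 : ℂ) ^ (s + (k : ℂ)) * α2 ^ (-(k : ℤ))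

/-!
Each term is `b k * z / (p k - z)` with poles `p k = α₁^(s+k) α₂^(-k)` of modulus
`α₁^Re s (α₁/|α₂|)^k → ∞`. On a compact set `K ⊆ closedBall 0 R` the `k`-th term is bounded by
`|b k| R / dist(p k, K)`, and once `|p k| ≥ 2R` this is at most `2R |b k / p k|`. The ratios
`|b k / p k| = (λ₁α₁)^(-Re s) |C(-s,k)| ρ^k` with `ρ = |λ₂α₂|/(λ₁α₁) < 1` are summable because
`|C(a,k)| ≤ C(k+m, m)` for any integer `m ≥ |a|`. Normal convergence gives holomorphy off the
poles, and at `p k` the remaining series is holomorphic, so `(z - p k) F(z) → -b k p k`.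
-/

lemma norm_cbinom_le_choose {a : ℂ} {m : ℕ} (hm : ‖a‖ ≤ m) (n : ℕ) :
    ‖cbinom a n‖ ≤ (n + m).choose m := by
  have hprod : ∏ i ∈ Finset.range n, ‖a - i‖ ≤ ∏ i ∈ Finset.range n, ((m + 1 + i : ℕ) : ℝ) := by
    refine Finset.prod_le_prod (fun _ _ => norm_nonneg _) fun i _ => ?_
    calc ‖a - i‖ ≤ ‖a‖ + i := by simpa using norm_sub_le a (i : ℂ)
      _ ≤ (m + 1 + i : ℕ) := by push_cast; linarith
  have hasc : ∏ i ∈ Finset.range n, ((m + 1 + i : ℕ) : ℝ) = n.factorial * (n + m).choose m := by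
    rw [← Nat.cast_prod, ← Nat.ascFactorial_eq_prod_range, Nat.ascFactorial_eq_factorial_mul_choose,
      add_comm m n, Nat.choose_symm_add]
    push_cast
    ring
  rw [cbinom, norm_div, norm_prod, norm_natCast, div_le_iff₀ (by positivity)]
  linarith

lemma summable_norm_cbinom_mul_pow_s15 (a : ℂ) {r : ℝ} (hr0 : 0 ≤ r) (hr : r < 1) :
    Summable fun n => ‖cbinom a n‖ * r ^ n :=
  (summable_choose_mul_geometric_of_norm_lt_one ⌈‖a‖⌉₊
      (by rwa [Real.norm_of_nonneg hr0])).of_nonneg_of_le (fun n => by positivity)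
    fun n => mul_le_mul_of_nonneg_right (norm_cbinom_le_choose (Nat.le_ceil _) n) (by positivity)

noncomputable def simplePoleTerm (b p : ℕ → ℂ) (k : ℕ) (z : ℂ) : ℂ := b k * (z / (p k - z))

section SimplePoleSeries

variable {b p : ℕ → ℂ}

lemma differentiableOn_simplePoleTerm {U : Set ℂ} {k : ℕ} (h : ∀ z ∈ U, b k ≠ 0 → z ≠ p k) :
    DifferentiableOn ℂ (simplePoleTerm b p k) U := by
  by_cases hbk : b k = 0
  · have hzero : simplePoleTerm b p k = fun _ => 0 := by funext z; simp [simplePoleTerm, hbk]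
    exact hzero ▸ differentiableOn_const 0
  · exact (differentiableOn_id.div (differentiableOn_const _ |>.sub differentiableOn_id)
      fun z hz => sub_ne_zero.2 (h z hz hbk).symm).const_mul _

lemma exists_summable_bound_simplePoleTerm (hp : Tendsto (fun k => ‖p k‖) atTop atTop)
    (hb : Summable fun k => ‖b k‖ / ‖p k‖) {K : Set ℂ} (hK : IsCompact K)
    (hKp : ∀ k, b k ≠ 0 → p k ∉ K) :
    ∃ u : ℕ → ℝ, Summable u ∧ ∀ k, ∀ z ∈ K, ‖simplePoleTerm b p k z‖ ≤ u k := by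
  rcases K.eq_empty_or_nonempty with rfl | hne
  · exact ⟨0, summable_zero, by simp⟩
  obtain ⟨R, hR⟩ := hK.isBounded.subset_closedBall 0
  have hRK : ∀ z ∈ K, ‖z‖ ≤ R := fun z hz => by simpa using hR hz
  have hR0 : 0 ≤ R := (norm_nonneg _).trans (hRK _ hne.some_mem)
  refine ⟨fun k => ‖b k‖ * R / Metric.infDist (p k) K, ?_, fun k z hz => ?_⟩
  · refine Summable.of_norm_bounded_eventually_nat (hb.mul_left (2 * R)) ?_
    filter_upwards [hp.eventually_ge_atTop (2 * R + 1)] with k hk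
    have hdist : ‖p k‖ / 2 ≤ Metric.infDist (p k) K :=
      (Metric.le_infDist hne).2 fun y hy => by
        have := norm_sub_norm_le (p k) y
        rw [dist_eq_norm]; linarith [hRK y hy]
    rw [Real.norm_of_nonneg (div_nonneg (by positivity) Metric.infDist_nonneg)]
    calc ‖b k‖ * R / Metric.infDist (p k) K ≤ ‖b k‖ * R / (‖p k‖ / 2) :=
          div_le_div_of_nonneg_left (by positivity) (by linarith) hdist
      _ = 2 * R * (‖b k‖ / ‖p k‖) := by field_simp
  · by_cases hbk : b k = 0
    · simp [simplePoleTerm, hbk]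
    have hdpos : 0 < Metric.infDist (p k) K :=
      (hK.isClosed.notMem_iff_infDist_pos hne).1 (hKp k hbk)
    have hdle : Metric.infDist (p k) K ≤ ‖p k - z‖ := by
      simpa [dist_eq_norm] using Metric.infDist_le_dist_of_mem hz (x := p k)
    rw [simplePoleTerm, norm_mul, norm_div, ← mul_div_assoc]
    exact div_le_div₀ (by positivity) (by gcongr; exact hRK z hz) hdpos hdle

lemma summable_simplePoleTerm (hp : Tendsto (fun k => ‖p k‖) atTop atTop)
    (hb : Summable fun k => ‖b k‖ / ‖p k‖) {z : ℂ} (hz : ∀ k, b k ≠ 0 → z ≠ p k) :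
    Summable fun k => simplePoleTerm b p k z := by
  obtain ⟨u, hu, hbound⟩ := exists_summable_bound_simplePoleTerm hp hb isCompact_singleton
    fun k hbk hmem => hz k hbk hmem.symm
  exact .of_norm_bounded hu fun k => hbound k z rfl

lemma eventually_nhds_forall_ne (hp : Tendsto (fun k => ‖p k‖) atTop atTop) {P : ℕ → Prop}
    {z₀ : ℂ} (h : ∀ k, P k → z₀ ≠ p k) : ∀ᶠ z in 𝓝 z₀, ∀ k, P k → z ≠ p k := by
  obtain ⟨N, hN⟩ := eventually_atTop.1 (hp.eventually_gt_atTop (‖z₀‖ + 1))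
  have hnear : ∀ᶠ z in 𝓝 z₀, ∀ k ∈ Finset.range N, P k → z ≠ p k :=
    (eventually_all_finset _).2 fun k _ =>
      eventually_imp_distrib_left.2 fun hk => eventually_ne_nhds (h k hk)
  have hsmall : ∀ᶠ z in 𝓝 z₀, ‖z‖ < ‖z₀‖ + 1 :=
    (continuous_norm.tendsto z₀).eventually (gt_mem_nhds (lt_add_one _))
  filter_upwards [hnear, hsmall] with z hz hz' k hk
  by_cases hkN : k < N
  · exact hz k (Finset.mem_range.2 hkN) hk
  · rintro rfl
    linarith [hN k (not_lt.1 hkN)]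

lemma analyticAt_tsum_simplePoleTerm (hp : Tendsto (fun k => ‖p k‖) atTop atTop)
    (hb : Summable fun k => ‖b k‖ / ‖p k‖) {z₀ : ℂ} (hz₀ : ∀ k, b k ≠ 0 → z₀ ≠ p k) :
    AnalyticAt ℂ (fun z => ∑' k, simplePoleTerm b p k z) z₀ := by
  obtain ⟨r, hr, hball⟩ :=
    Metric.nhds_basis_closedBall.eventually_iff.1 (eventually_nhds_forall_ne hp hz₀)
  obtain ⟨u, hu, hbound⟩ := exists_summable_bound_simplePoleTerm hp hb
    (isCompact_closedBall z₀ r) fun k hbk hmem => hball hmem k hbk rfl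
  have hsub := Metric.ball_subset_closedBall (x := z₀) (ε := r)
  have hdiff := differentiableOn_tsum_of_summable_norm hu
    (fun k => differentiableOn_simplePoleTerm fun z hz => hball (hsub hz) k)
    Metric.isOpen_ball fun k z hz => hbound k z (hsub hz)
  exact hdiff.analyticAt (Metric.ball_mem_nhds z₀ hr)

lemma simplePoleTerm_update_zero (k j : ℕ) (z : ℂ) :
    simplePoleTerm (Function.update b k 0) p j z =
      Function.update (fun j => simplePoleTerm b p j z) k 0 j := by
  rcases eq_or_ne j k with rfl | hjk <;> simp [simplePoleTerm, *]

lemma tendsto_sub_mul_tsum_simplePoleTerm (hp : Tendsto (fun k => ‖p k‖) atTop atTop)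
    (hb : Summable fun k => ‖b k‖ / ‖p k‖) (hinj : Function.Injective p) (k : ℕ) :
    Tendsto (fun z => (z - p k) * ∑' j, simplePoleTerm b p j z) (𝓝[≠] p k)
      (𝓝 (-(b k * p k))) := by
  set b' := Function.update b k 0
  set G := fun z => ∑' j, simplePoleTerm b' p j z
  have hb' : Summable fun j => ‖b' j‖ / ‖p j‖ :=
    hb.of_nonneg_of_le (fun _ => by positivity) fun j => by
      rcases eq_or_ne j k with rfl | hjk <;> simp [b', *, div_nonneg]
  have hpoles : ∀ j, b' j ≠ 0 → p k ≠ p j := fun j hj =>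
    (hinj.ne (by rintro rfl; simp [b'] at hj)).symm
  have hG : ContinuousAt G (p k) := (analyticAt_tsum_simplePoleTerm hp hb' hpoles).continuousAt
  have hlim : Tendsto (fun z => -(b k * z) + (z - p k) * G z) (𝓝[≠] p k) (𝓝 (-(b k * p k))) := by
    have : ContinuousAt (fun z => -(b k * z) + (z - p k) * G z) (p k) := by fun_prop
    simpa using this.tendsto.mono_left nhdsWithin_le_nhds
  refine hlim.congr' ?_
  filter_upwards [nhdsWithin_le_nhds (eventually_nhds_forall_ne hp hpoles),
    self_mem_nhdsWithin] with z hz hzk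
  have hsplit : ∑' j, simplePoleTerm b p j z = simplePoleTerm b p k z + G z := by
    have hsum := summable_simplePoleTerm hp hb' hz
    simp only [b', simplePoleTerm_update_zero] at hsum
    rw [hsum.tsum_eq_add_tsum_ite' k]
    exact congrArg _ (tsum_congr fun j => by rw [simplePoleTerm_update_zero, Function.update_apply])
  rw [hsplit, simplePoleTerm]
  field_simp [sub_ne_zero.2 hzk, sub_ne_zero.2 (Ne.symm hzk)]
  ring

end SimplePoleSeries

noncomputable def coeff15 (s : ℂ) (lam1 : ℝ) (lam2 : ℂ) (k : ℕ) : ℂ :=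
  cbinom (-s) k * (lam1 : ℂ) ^ (-s - (k : ℂ)) * lam2 ^ k

lemma term15_eq_simplePoleTerm (s : ℂ) (lam1 α1 : ℝ) (lam2 α2 : ℂ) :
    term15 s lam1 α1 lam2 α2 = simplePoleTerm (coeff15 s lam1 lam2) (pole15 s α1 α2) :=
  rfl

lemma norm_pole15 (s : ℂ) {α1 : ℝ} (hα1 : 0 < α1) {α2 : ℂ} (hα2 : α2 ≠ 0) (k : ℕ) :
    ‖pole15 s α1 α2 k‖ = α1 ^ s.re * (α1 / ‖α2‖) ^ k := by
  rw [pole15, norm_mul, norm_cpow_eq_rpow_re_of_pos hα1, norm_zpow, zpow_neg, zpow_natCast,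
    add_re, natCast_re, Real.rpow_add hα1, Real.rpow_natCast, div_pow]
  field_simp

lemma strictMono_norm_pole15 (s : ℂ) {α1 : ℝ} (hα1 : 0 < α1) {α2 : ℂ} (hα2 : α2 ≠ 0)
    (hα2' : ‖α2‖ < α1) : StrictMono fun k => ‖pole15 s α1 α2 k‖ := by
  simp only [norm_pole15 s hα1 hα2]
  exact (pow_right_strictMono₀ ((one_lt_div (norm_pos_iff.2 hα2)).2 hα2')).const_mul
    (Real.rpow_pos_of_pos hα1 _)

lemma tendsto_norm_pole15 (s : ℂ) {α1 : ℝ} (hα1 : 0 < α1) {α2 : ℂ} (hα2 : α2 ≠ 0)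
    (hα2' : ‖α2‖ < α1) : Tendsto (fun k => ‖pole15 s α1 α2 k‖) atTop atTop := by
  simp only [norm_pole15 s hα1 hα2]
  exact (tendsto_pow_atTop_atTop_of_one_lt ((one_lt_div (norm_pos_iff.2 hα2)).2 hα2')
    ).const_mul_atTop (Real.rpow_pos_of_pos hα1 _)

lemma norm_coeff15 (s : ℂ) {lam1 : ℝ} (hlam1 : 0 < lam1) (lam2 : ℂ) (k : ℕ) :
    ‖coeff15 s lam1 lam2 k‖ = ‖cbinom (-s) k‖ * lam1 ^ (-s.re - k) * ‖lam2‖ ^ k := by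
  rw [coeff15, norm_mul, norm_mul, norm_cpow_eq_rpow_re_of_pos hlam1, norm_pow, sub_re, neg_re,
    natCast_re]

lemma summable_norm_coeff15_div_norm_pole15 (s : ℂ) {lam1 α1 : ℝ} (hlam1 : 0 < lam1)
    (hα1 : 0 < α1) {lam2 α2 : ℂ} (hα2 : α2 ≠ 0) (hdom : ‖lam2 * α2‖ < lam1 * α1) :
    Summable fun k => ‖coeff15 s lam1 lam2 k‖ / ‖pole15 s α1 α2 k‖ := by
  have hratio : ∀ k, ‖coeff15 s lam1 lam2 k‖ / ‖pole15 s α1 α2 k‖ =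
      (lam1 * α1) ^ (-s.re) * (‖cbinom (-s) k‖ * (‖lam2 * α2‖ / (lam1 * α1)) ^ k) := fun k => by
    rw [norm_coeff15 s hlam1, norm_pole15 s hα1 hα2, Real.rpow_sub hlam1, Real.rpow_natCast,
      Real.mul_rpow hlam1.le hα1.le, Real.rpow_neg hα1.le, norm_mul, div_pow, div_pow, mul_pow,
      mul_pow]
    have := norm_pos_iff.2 hα2
    field_simp
  simp only [hratio]
  exact (summable_norm_cbinom_mul_pow_s15 (-s) (by positivity)
    ((div_lt_one (by positivity)).2 hdom)).mul_left _

theorem normal_convergence_and_meromorphy_in_z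
    (lam1 α1 : ℝ) (hlam1 : 0 < lam1) (hα1 : 1 < α1)
    (lam2 α2 : ℂ) (hα2 : 0 < ‖α2‖) (hα2' : ‖α2‖ < α1)
    (hdom : ‖lam2 * α2‖ < lam1 * α1) (s : ℂ) :
    (∀ K : Set ℂ, IsCompact K → (∀ k : ℕ, pole15 s α1 α2 k ∉ K) →
      ∃ u : ℕ → ℝ, Summable u ∧
        ∀ k : ℕ, ∀ z ∈ K, ‖term15 s lam1 α1 lam2 α2 k z‖ ≤ u k) ∧
    (∀ z : ℂ, (∀ k : ℕ, z ≠ pole15 s α1 α2 k) →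
      AnalyticAt ℂ (fun z => ∑' k : ℕ, term15 s lam1 α1 lam2 α2 k z) z) ∧
    (∀ k : ℕ, ∃ c : ℂ,
      Tendsto (fun z : ℂ => (z - pole15 s α1 α2 k) *
          ∑' j : ℕ, term15 s lam1 α1 lam2 α2 j z)
        (𝓝[≠] (pole15 s α1 α2 k)) (𝓝 c)) := by
  have hα1₀ : 0 < α1 := one_pos.trans hα1
  have hα2₀ : α2 ≠ 0 := norm_pos_iff.1 hα2
  have hp := tendsto_norm_pole15 s hα1₀ hα2₀ hα2'
  have hb := summable_norm_coeff15_div_norm_pole15 s hlam1 hα1₀ hα2₀ hdom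
  have hinj := (strictMono_norm_pole15 s hα1₀ hα2₀ hα2').injective.of_comp
  simp only [term15_eq_simplePoleTerm]
  exact ⟨fun K hK hKp => exists_summable_bound_simplePoleTerm hp hb hK fun k _ => hKp k,
    fun z hz => analyticAt_tsum_simplePoleTerm hp hb fun k _ => hz k,
    fun k => ⟨_, tendsto_sub_mul_tsum_simplePoleTerm hp hb hinj k⟩⟩
end
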